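/- For arbitrary positive semidefinite operators ρ, σ on a finite-dimensional Hilbert space, one has ((Tr ρ + Tr σ)/2 - ‖ρ-σ‖₁/2)² ≤ F(ρ,σ) ≤ (Tr ρ + Tr σ)²/4 - (1/4)‖ρ-σ‖₁², generalizing the Fuchs–van de Graaf inequalities to non-normalized operators. -/

import Mathlib

open Matrix
open scoped ComplexOrder Classical

/-- The square root of a positive semidefinite matrix, as `Matrix.PosSemidef.sqrt` was defined in Mathlib (Dec 2024). -/
noncomputable def psdSqrt {n : Type*} [Fintype n] [DecidableEq n] {A : Matrix n n ℂ} (hA : A.PosSemidef) :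
    Matrix n n ℂ :=
  hA.1.eigenvectorUnitary.1 * diagonal ((↑) ∘ (√·) ∘ hA.1.eigenvalues) *
  (star hA.1.eigenvectorUnitary : Matrix n n ℂ)

/-- The trace norm `‖X‖₁ = Tr √(XᴴX)` of a complex matrix. -/
noncomputable def traceNorm {n : Type*} [Fintype n] [DecidableEq n] (X : Matrix n n ℂ) : ℝ :=
  ((psdSqrt (Matrix.posSemidef_conjTranspose_mul_self X)).trace).re

/-- The positive semidefinite square root, extended by `0` off the PSD cone. -/
noncomputable def msqrt {n : Type*} [Fintype n] [DecidableEq n] (X : Matrix n n ℂ) : Matrix n n ℂ :=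
  if h : X.PosSemidef then psdSqrt h else 0

/-- The fidelity `F(ρ,σ) = ‖√ρ √σ‖₁²`. -/
noncomputable def fidelity {n : Type*} [Fintype n] [DecidableEq n] (ρ σ : Matrix n n ℂ) : ℝ :=
  (traceNorm (msqrt ρ * msqrt σ)) ^ 2


/-!
Write `A = √ρ`, `B = √σ`, `t = Tr ρ + Tr σ`, `T = ‖ρ - σ‖₁` and `f = ‖A B‖₁`, so that `F = f²`.

Upper bound: let `P` be the spectral projection of `ρ - σ` onto its nonnegative part, so that
`T = Tr ((2P - 1)(ρ - σ))`. By polar decomposition `f = Re Tr (A B W)` for a unitary `W`; splitting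
`1 = P + (1 - P)` inside `A B` and applying Cauchy–Schwarz to each half gives
`f ≤ √(a c) + √(b d)` for the outcome weights `a, b = Tr Pρ, Tr (1 - P)ρ` and
`c, d = Tr Pσ, Tr (1 - P)σ` of the measurement `{P, 1 - P}`. As `T = a - b - c + d` and
`t = a + b + c + d`, AM–GM turns this into `T² + 4 f² ≤ t²`.

Lower bound: the Powers–Størmer inequality `Tr (A - B)² ≤ ‖A² - B²‖₁` reads
`t - 2 Re Tr (A B) ≤ T`, and `Re Tr (A B) ≤ f`; the upper bound gives `T ≤ t`, so `t - T` may be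
squared.
-/

open scoped MatrixOrder

namespace Matrix

lemma trace_conjTranspose_mul_eq_inner {𝕜 m n : Type*} [RCLike 𝕜] [Fintype m] [Fintype n]
    (M N : Matrix m n 𝕜) :
    (Mᴴ * N).trace =
      inner 𝕜 (WithLp.toLp 2 (fun p : m × n => M p.1 p.2) : EuclideanSpace 𝕜 (m × n))
        (WithLp.toLp 2 fun p : m × n => N p.1 p.2) := by
  simp only [trace, diag, mul_apply, conjTranspose_apply, PiLp.inner_apply, RCLike.inner_apply,
    Fintype.sum_prod_type, mul_comm (N _ _)]
  exact Finset.sum_comm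

lemma norm_trace_conjTranspose_mul_le {𝕜 m n : Type*} [RCLike 𝕜] [Fintype m] [Fintype n]
    (M N : Matrix m n 𝕜) :
    ‖(Mᴴ * N).trace‖ ≤ √(RCLike.re (Mᴴ * M).trace) * √(RCLike.re (Nᴴ * N).trace) := by
  simpa only [trace_conjTranspose_mul_eq_inner, ← norm_eq_sqrt_re_inner] using
    norm_inner_le_norm (𝕜 := 𝕜) _ _

section Fintype

variable {n : Type*} [Fintype n]

lemma PosSemidef.re_trace_nonneg {M : Matrix n n ℂ} (hM : M.PosSemidef) : 0 ≤ M.trace.re :=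
  (RCLike.nonneg_iff.mp hM.trace_nonneg).1

lemma norm_trace_conjTranspose_mul_proj_mul_le {P : Matrix n n ℂ} (hP : IsStarProjection P)
    (X Y : Matrix n n ℂ) :
    ‖(Xᴴ * P * Y).trace‖ ≤ √(P * (X * Xᴴ)).trace.re * √(P * (Y * Yᴴ)).trace.re := by
  have hPP : Pᴴ * P = P := by
    rw [← star_eq_conjTranspose, hP.isSelfAdjoint.star_eq, hP.isIdempotentElem.eq]
  have hsq (Z : Matrix n n ℂ) : ((P * Z)ᴴ * (P * Z)).trace = (P * (Z * Zᴴ)).trace := by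
    rw [conjTranspose_mul, mul_assoc, ← mul_assoc Pᴴ, hPP, trace_mul_comm, mul_assoc]
  have hXY : Xᴴ * P * Y = (P * X)ᴴ * (P * Y) := by
    rw [conjTranspose_mul, mul_assoc Xᴴ Pᴴ, ← mul_assoc Pᴴ, hPP, mul_assoc]
  rw [hXY, ← hsq X, ← hsq Y]
  exact norm_trace_conjTranspose_mul_le _ _

end Fintype

variable {n : Type*} [Fintype n] [DecidableEq n]

lemma PosSemidef.re_trace_mul_nonneg {M N : Matrix n n ℂ} (hM : M.PosSemidef) (hN : N.PosSemidef) :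
    0 ≤ (M * N).trace.re := by
  set R := CFC.sqrt N
  have hR : Rᴴ = R := (CFC.sqrt_nonneg N).posSemidef.1
  have hRR : R * R = N := CFC.sqrt_mul_sqrt_self N hN.nonneg
  have h : (M * N).trace = (Rᴴ * M * R).trace := by
    rw [← hRR, hR, ← mul_assoc, trace_mul_cycle]
  rw [h]
  exact (hM.conjTranspose_mul_mul_same _).re_trace_nonneg

lemma PosSemidef.norm_trace_mul_unitary_le {H U : Matrix n n ℂ} (hH : H.PosSemidef)
    (hU : U ∈ unitaryGroup n ℂ) : ‖(H * U).trace‖ ≤ H.trace.re := by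
  set R := CFC.sqrt H
  have hR : Rᴴ = R := (CFC.sqrt_nonneg H).posSemidef.1
  have hRR : R * R = H := CFC.sqrt_mul_sqrt_self H hH.nonneg
  have hUR : (U * R)ᴴ * (U * R) = H := by
    rw [conjTranspose_mul, hR, mul_assoc, ← mul_assoc Uᴴ, ← star_eq_conjTranspose,
      Unitary.star_mul_self_of_mem hU, one_mul, hRR]
  have h : (H * U).trace = (Rᴴ * (U * R)).trace := by
    rw [← hRR, hR, mul_assoc, trace_mul_comm R, mul_assoc]
  calc ‖(H * U).trace‖ = ‖(Rᴴ * (U * R)).trace‖ := by rw [h]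
    _ ≤ √(Rᴴ * R).trace.re * √((U * R)ᴴ * (U * R)).trace.re :=
        norm_trace_conjTranspose_mul_le _ _
    _ = H.trace.re := by rw [hUR, hR, hRR, Real.mul_self_sqrt hH.re_trace_nonneg]

lemma IsHermitian.exists_isStarProjection_mul_eq_abs {C : Matrix n n ℂ} (hC : C.IsHermitian) :
    ∃ P : Matrix n n ℂ, IsStarProjection P ∧
      (2 * P - 1) * C = CFC.abs C ∧ C * (2 * P - 1) = CFC.abs C := by
  set f : ℝ → ℝ := fun x => if 0 ≤ x then 1 else 0
  -- `f` is discontinuous, but only its values on the finite spectrum matter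
  have hf : ContinuousOn f (spectrum ℝ C) := C.finite_real_spectrum.continuousOn f
  have hC' : IsSelfAdjoint C := hC.isSelfAdjoint
  have hsign : 2 * cfc f C - 1 = cfc (fun x => 2 * f x - 1) C := by
    rw [cfc_sub _ _ C, cfc_const_mul (2 : ℝ) f C, cfc_const_one ℝ C, Algebra.smul_def, map_ofNat]
  have habs : CFC.abs C = cfc (fun x => (2 * f x - 1) * x) C := by
    rw [CFC.abs_eq_cfc_norm C]
    refine cfc_congr fun x _ => ?_
    by_cases hx : 0 ≤ x
    · norm_num [f, hx, abs_of_nonneg]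
    · simp [f, hx, abs_of_neg (not_le.mp hx)]
  have hmul : (2 * cfc f C - 1) * C = CFC.abs C := by
    rw [hsign, habs, cfc_mul _ _ C, cfc_id' ℝ C]
  refine ⟨cfc f C, ⟨?_, cfc_predicate f C⟩, hmul, ?_⟩
  · rw [IsIdempotentElem, ← cfc_mul f f C]
    exact cfc_congr fun x _ => by by_cases hx : 0 ≤ x <;> simp [f, hx]
  · have hcomm := cfc_commute_cfc (fun x : ℝ => x) (fun x => 2 * f x - 1) C
    rw [cfc_id' ℝ C, ← hsign] at hcomm
    rw [hcomm.eq, hmul]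

lemma IsHermitian.toEuclideanLin_eigenvectorBasis {H : Matrix n n ℂ} (hH : H.IsHermitian) (j : n) :
    toEuclideanLin H (hH.eigenvectorBasis j) = (hH.eigenvalues j : ℂ) • hH.eigenvectorBasis j := by
  rw [toLpLin_apply, hH.mulVec_eigenvectorBasis, RCLike.real_smul_eq_coe_smul (K := ℂ)]
  rfl

lemma IsHermitian.inner_toEuclideanLin_eigenvectorBasis {H X : Matrix n n ℂ} (hH : H.IsHermitian)
    (hHX : H * H = Xᴴ * X) (j k : n) :
    inner ℂ (toEuclideanLin X (hH.eigenvectorBasis j)) (toEuclideanLin X (hH.eigenvectorBasis k)) =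
      if j = k then ((hH.eigenvalues j ^ 2 : ℝ) : ℂ) else 0 := by
  rw [← LinearMap.adjoint_inner_right, ← toEuclideanLin_conjTranspose_eq_adjoint,
    ← LinearMap.comp_apply, ← toLpLin_mul_same, ← hHX, toLpLin_mul_same, LinearMap.comp_apply,
    hH.toEuclideanLin_eigenvectorBasis, map_smul, hH.toEuclideanLin_eigenvectorBasis,
    inner_smul_right, inner_smul_right, orthonormal_iff_ite.mp hH.eigenvectorBasis.orthonormal]
  split_ifs with h <;> simp [h, sq]

/-- A polar decomposition `X = V H`: `V` maps the eigenvector `eⱼ` of `H` to `X eⱼ / μⱼ` when the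
eigenvalue `μⱼ` is nonzero; these images are orthonormal, and `V` is completed on the kernel of `H`
by extending them to an orthonormal basis. -/
lemma IsHermitian.exists_unitary_mul_eq {H X : Matrix n n ℂ} (hH : H.IsHermitian)
    (hHX : H * H = Xᴴ * X) : ∃ V ∈ unitaryGroup n ℂ, V * H = X := by
  have hc := hH.inner_toEuclideanLin_eigenvectorBasis hHX
  set e := hH.eigenvectorBasis
  set μ := hH.eigenvalues
  set c : n → EuclideanSpace ℂ n := fun j => toEuclideanLin X (e j)
  set s : Set n := {j | μ j ≠ 0}
  set v : n → EuclideanSpace ℂ n := fun j => ((μ j : ℂ)⁻¹) • c j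
  have hv : Orthonormal ℂ (s.domRestrict v) := by
    rw [orthonormal_iff_ite]
    rintro ⟨j, hj⟩ ⟨k, hk⟩
    change inner ℂ (v j) (v k) = _
    simp only [v, c, inner_smul_left, inner_smul_right, hc, Subtype.mk.injEq, map_inv₀,
      Complex.conj_ofReal]
    split_ifs with h
    · subst h
      have : (μ j : ℂ) ≠ 0 := by exact_mod_cast hj
      field_simp
      push_cast
      ring
    · simp
  obtain ⟨b, hb⟩ := hv.exists_orthonormalBasis_extension_of_card_eq finrank_euclideanSpace
  set L := e.equiv b (Equiv.refl n)
  set bF := (EuclideanSpace.basisFun n ℂ).toBasis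
  have hL : toEuclideanLin (LinearMap.toMatrix bF bF L) = L := by
    rw [toEuclideanLin_eq_toLin_orthonormal, Matrix.toLin_toMatrix]
  refine ⟨LinearMap.toMatrix bF bF L, L.toMatrix_mem_unitaryGroup _ _, ?_⟩
  apply toEuclideanLin.injective
  refine e.toBasis.ext fun j => ?_
  rw [toLpLin_mul_same, LinearMap.comp_apply, OrthonormalBasis.coe_toBasis,
    hH.toEuclideanLin_eigenvectorBasis, map_smul, hL]
  change (μ j : ℂ) • L (e j) = c j
  rw [OrthonormalBasis.equiv_apply_basis, Equiv.refl_apply]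
  by_cases hj : μ j = 0
  · have : inner ℂ (c j) (c j) = 0 := by rw [hc]; simp [μ, hj]
    rw [inner_self_eq_zero.mp this, hj]
    simp
  · rw [hb j hj, smul_inv_smul₀ (by exact_mod_cast hj)]

lemma exists_unitary_mul_abs_eq (X : Matrix n n ℂ) :
    ∃ V ∈ unitaryGroup n ℂ, V * CFC.abs X = X :=
  (CFC.abs_nonneg X).posSemidef.1.exists_unitary_mul_eq (CFC.abs_mul_abs X)

end Matrix

section TraceNorm

variable {n : Type*} [Fintype n] [DecidableEq n]

lemma psdSqrt_eq_cfcSqrt {A : Matrix n n ℂ} (hA : A.PosSemidef) : psdSqrt hA = CFC.sqrt A := by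
  rw [CFC.sqrt_eq_cfc, cfc_nnreal_eq_real _ A hA.nonneg, hA.1.cfc_eq]
  simp only [psdSqrt, IsHermitian.cfc, Unitary.conjStarAlgAut_apply]
  congr 3
  funext i
  simp only [Function.comp_apply]
  rw [Real.sqrt]
  rfl

lemma msqrt_of_posSemidef {A : Matrix n n ℂ} (hA : A.PosSemidef) : msqrt A = CFC.sqrt A := by
  rw [msqrt, dif_pos hA, psdSqrt_eq_cfcSqrt]

lemma traceNorm_eq_re_trace_abs (X : Matrix n n ℂ) : traceNorm X = (CFC.abs X).trace.re := by
  rw [traceNorm, psdSqrt_eq_cfcSqrt, CFC.abs, star_eq_conjTranspose]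

lemma traceNorm_nonneg (X : Matrix n n ℂ) : 0 ≤ traceNorm X := by
  rw [traceNorm_eq_re_trace_abs]
  exact (CFC.abs_nonneg X).posSemidef.re_trace_nonneg

lemma norm_trace_mul_unitary_le_traceNorm (X : Matrix n n ℂ) {W : Matrix n n ℂ}
    (hW : W ∈ unitaryGroup n ℂ) : ‖(X * W).trace‖ ≤ traceNorm X := by
  obtain ⟨V, hV, hVX⟩ := X.exists_unitary_mul_abs_eq
  rw [traceNorm_eq_re_trace_abs]
  conv_lhs => rw [← hVX, mul_assoc, trace_mul_comm, mul_assoc]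
  exact (CFC.abs_nonneg X).posSemidef.norm_trace_mul_unitary_le (Submonoid.mul_mem _ hW hV)

lemma norm_trace_le_traceNorm (X : Matrix n n ℂ) : ‖X.trace‖ ≤ traceNorm X := by
  simpa using norm_trace_mul_unitary_le_traceNorm X (one_mem _)

lemma exists_unitary_re_trace_mul_eq_traceNorm (X : Matrix n n ℂ) :
    ∃ W ∈ unitaryGroup n ℂ, (X * W).trace.re = traceNorm X := by
  obtain ⟨V, hV, hVX⟩ := X.exists_unitary_mul_abs_eq
  refine ⟨star V, Unitary.star_mem hV, ?_⟩
  conv_lhs => rw [← hVX, trace_mul_cycle, Unitary.star_mul_self_of_mem hV, one_mul]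
  rw [traceNorm_eq_re_trace_abs]

theorem Matrix.PosSemidef.re_trace_sub_mul_sub_le_traceNorm {A B : Matrix n n ℂ}
    (hA : A.PosSemidef) (hB : B.PosSemidef) :
    ((A - B) * (A - B)).trace.re ≤ traceNorm (A * A - B * B) := by
  obtain ⟨P, hP, hPD, hDP⟩ := (hA.1.sub hB.1).exists_isStarProjection_mul_eq_abs
  set D := A - B
  have hD : IsSelfAdjoint D := (hA.1.sub hB.1).isSelfAdjoint
  have hsym : ((A * A - B * B) * (2 * P - 1)).trace = (CFC.abs D * (A + B)).trace := by
    have h2 : (2 : ℂ) • (A * A - B * B) = D * (A + B) + (A + B) * D := by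
      simp only [D, two_smul]; noncomm_ring
    have h3 : ((2 * P - 1) * (D * (A + B))).trace = (CFC.abs D * (A + B)).trace := by
      rw [← mul_assoc, hPD]
    have h4 : ((2 * P - 1) * ((A + B) * D)).trace = (CFC.abs D * (A + B)).trace := by
      rw [trace_mul_comm, mul_assoc, hDP, trace_mul_comm]
    refine mul_left_cancel₀ (two_ne_zero (α := ℂ)) ?_
    rw [trace_mul_comm, ← smul_eq_mul, ← trace_smul, ← mul_smul_comm, h2, mul_add, trace_add, h3,
      h4, two_mul]
  have hparts : CFC.abs D * (A + B) - D * D = (2 : ℝ) • (D⁻ * A) + (2 : ℝ) • (D⁺ * B) :=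
    calc CFC.abs D * (A + B) - D * D = (D⁺ + D⁻) * (A + B) - (D⁺ - D⁻) * (A - B) := by
          rw [CFC.posPart_add_negPart D, CFC.posPart_sub_negPart D]
      _ = (2 : ℝ) • (D⁻ * A) + (2 : ℝ) • (D⁺ * B) := by simp only [two_smul]; noncomm_ring
  have hgap : 0 ≤ (CFC.abs D * (A + B)).trace.re - (D * D).trace.re := by
    rw [← Complex.sub_re, ← trace_sub, hparts, trace_add, trace_smul, trace_smul]
    have := (CFC.negPart_nonneg D).posSemidef.re_trace_mul_nonneg hA
    have := (CFC.posPart_nonneg D).posSemidef.re_trace_mul_nonneg hB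
    simp only [Complex.add_re, Complex.smul_re, smul_eq_mul]
    positivity
  calc (D * D).trace.re ≤ (CFC.abs D * (A + B)).trace.re := by linarith
    _ = ((A * A - B * B) * (2 * P - 1)).trace.re := by rw [hsym]
    _ ≤ ‖((A * A - B * B) * (2 * P - 1)).trace‖ := Complex.re_le_norm _
    _ ≤ traceNorm (A * A - B * B) :=
        norm_trace_mul_unitary_le_traceNorm _ hP.two_mul_sub_one_mem_unitary

lemma traceNorm_conjTranspose_mul_le {P : Matrix n n ℂ} (hP : IsStarProjection P)
    (X Y : Matrix n n ℂ) :
    traceNorm (Xᴴ * Y) ≤ √(P * (X * Xᴴ)).trace.re * √(P * (Y * Yᴴ)).trace.re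
      + √((1 - P) * (X * Xᴴ)).trace.re * √((1 - P) * (Y * Yᴴ)).trace.re := by
  obtain ⟨W, hW, hXYW⟩ := exists_unitary_re_trace_mul_eq_traceNorm (Xᴴ * Y)
  have hYW : Y * W * (Y * W)ᴴ = Y * Yᴴ := by
    rw [conjTranspose_mul, mul_assoc, ← mul_assoc W, ← star_eq_conjTranspose,
      Unitary.mul_star_self_of_mem hW, one_mul]
  have hsplit : Xᴴ * Y * W = Xᴴ * P * (Y * W) + Xᴴ * (1 - P) * (Y * W) := by noncomm_ring
  have h₁ := norm_trace_conjTranspose_mul_proj_mul_le hP X (Y * W)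
  have h₂ := norm_trace_conjTranspose_mul_proj_mul_le hP.one_sub X (Y * W)
  rw [hYW] at h₁ h₂
  calc traceNorm (Xᴴ * Y) = (Xᴴ * Y * W).trace.re := hXYW.symm
    _ ≤ ‖(Xᴴ * Y * W).trace‖ := Complex.re_le_norm _
    _ ≤ ‖(Xᴴ * P * (Y * W)).trace‖ + ‖(Xᴴ * (1 - P) * (Y * W)).trace‖ := by
        rw [hsplit, trace_add]; exact norm_add_le _ _
    _ ≤ _ := add_le_add h₁ h₂

lemma sq_add_four_mul_sq_le_of_le_sqrt {a b c d f : ℝ} (ha : 0 ≤ a) (hb : 0 ≤ b) (hc : 0 ≤ c)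
    (hd : 0 ≤ d) (hf : 0 ≤ f) (hfle : f ≤ √a * √c + √b * √d) :
    (a - b - c + d) ^ 2 + 4 * f ^ 2 ≤ (a + b + c + d) ^ 2 := by
  have hamgm : (√a * √c + √b * √d) ^ 2 ≤ (a + d) * (b + c) := by
    nlinarith [sq_nonneg (√a * √b - √c * √d), Real.sq_sqrt ha, Real.sq_sqrt hb,
      Real.sq_sqrt hc, Real.sq_sqrt hd]
  have hf2 : f ^ 2 ≤ (a + d) * (b + c) := (pow_le_pow_left₀ hf hfle 2).trans hamgm
  linear_combination 4 * hf2

lemma fidelity_of_posSemidef {ρ σ : Matrix n n ℂ} (hρ : ρ.PosSemidef) (hσ : σ.PosSemidef) :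
    fidelity ρ σ = traceNorm (CFC.sqrt ρ * CFC.sqrt σ) ^ 2 := by
  rw [fidelity, msqrt_of_posSemidef hρ, msqrt_of_posSemidef hσ]

theorem traceNorm_sub_sq_add_four_mul_fidelity_le {ρ σ : Matrix n n ℂ} (hρ : ρ.PosSemidef)
    (hσ : σ.PosSemidef) :
    traceNorm (ρ - σ) ^ 2 + 4 * fidelity ρ σ ≤ (ρ.trace.re + σ.trace.re) ^ 2 := by
  obtain ⟨P, hP, hPC, -⟩ := (hρ.1.sub hσ.1).exists_isStarProjection_mul_eq_abs
  set A := CFC.sqrt ρ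
  set B := CFC.sqrt σ
  have hA : Aᴴ = A := (CFC.sqrt_nonneg ρ).posSemidef.1
  have hB : Bᴴ = B := (CFC.sqrt_nonneg σ).posSemidef.1
  have hf := traceNorm_conjTranspose_mul_le hP A B
  rw [hA, hB, CFC.sqrt_mul_sqrt_self ρ hρ.nonneg, CFC.sqrt_mul_sqrt_self σ hσ.nonneg] at hf
  have hT : traceNorm (ρ - σ) = (P * ρ).trace.re - ((1 - P) * ρ).trace.re
      - (P * σ).trace.re + ((1 - P) * σ).trace.re := by
    rw [traceNorm_eq_re_trace_abs, ← hPC]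
    simp only [← Complex.sub_re, ← Complex.add_re, ← trace_sub, ← trace_add]
    congr 2
    noncomm_ring
  have ht (M : Matrix n n ℂ) : M.trace.re = (P * M).trace.re + ((1 - P) * M).trace.re := by
    rw [← Complex.add_re, ← trace_add, ← add_mul, add_sub_cancel, one_mul]
  have hP₀ := hP.nonneg.posSemidef
  have hP₁ := hP.one_sub.nonneg.posSemidef
  rw [fidelity_of_posSemidef hρ hσ, hT, ht ρ, ht σ]
  have := sq_add_four_mul_sq_le_of_le_sqrt (hP₀.re_trace_mul_nonneg hρ)
    (hP₁.re_trace_mul_nonneg hρ) (hP₀.re_trace_mul_nonneg hσ) (hP₁.re_trace_mul_nonneg hσ)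
    (traceNorm_nonneg _) hf
  linarith

theorem trace_add_trace_sub_traceNorm_sub_le {ρ σ : Matrix n n ℂ} (hρ : ρ.PosSemidef)
    (hσ : σ.PosSemidef) :
    ρ.trace.re + σ.trace.re - traceNorm (ρ - σ) ≤ 2 * √(fidelity ρ σ) := by
  set A := CFC.sqrt ρ
  set B := CFC.sqrt σ
  have hAA : A * A = ρ := CFC.sqrt_mul_sqrt_self ρ hρ.nonneg
  have hBB : B * B = σ := CFC.sqrt_mul_sqrt_self σ hσ.nonneg
  have hPS := (CFC.sqrt_nonneg ρ).posSemidef.re_trace_sub_mul_sub_le_traceNorm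
    (CFC.sqrt_nonneg σ).posSemidef
  have hexp : ((A - B) * (A - B)).trace.re = ρ.trace.re + σ.trace.re - 2 * (A * B).trace.re := by
    rw [← hAA, ← hBB, sub_mul, mul_sub, mul_sub, trace_sub, trace_sub, trace_sub,
      trace_mul_comm B A]
    simp only [Complex.sub_re]
    ring
  rw [hAA, hBB, hexp] at hPS
  rw [fidelity_of_posSemidef hρ hσ, Real.sqrt_sq (traceNorm_nonneg _)]
  linarith [(Complex.re_le_norm _).trans (norm_trace_le_traceNorm (A * B))]

end TraceNorm

/-- Generalized Fuchs–van de Graaf inequalities for arbitrary positive semidefinite operators. -/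
theorem fuchs_van_de_graaf_generalized {n : Type*} [Fintype n] [DecidableEq n]
    (ρ σ : Matrix n n ℂ) (hρ : ρ.PosSemidef) (hσ : σ.PosSemidef) :
    ((ρ.trace.re + σ.trace.re) / 2 - traceNorm (ρ - σ) / 2) ^ 2 ≤ fidelity ρ σ ∧
      fidelity ρ σ ≤ (ρ.trace.re + σ.trace.re) ^ 2 / 4 - (1 / 4) * traceNorm (ρ - σ) ^ 2 := by
  have hupper := traceNorm_sub_sq_add_four_mul_fidelity_le hρ hσ
  have hlower := trace_add_trace_sub_traceNorm_sub_le hρ hσ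
  have hF : 0 ≤ fidelity ρ σ := sq_nonneg _
  have ht : 0 ≤ ρ.trace.re + σ.trace.re := add_nonneg hρ.re_trace_nonneg hσ.re_trace_nonneg
  have hT : traceNorm (ρ - σ) ≤ ρ.trace.re + σ.trace.re :=
    abs_le_of_sq_le_sq' (by linarith) ht |>.2
  refine ⟨?_, by linarith⟩
  calc ((ρ.trace.re + σ.trace.re) / 2 - traceNorm (ρ - σ) / 2) ^ 2 ≤ √(fidelity ρ σ) ^ 2 :=
        pow_le_pow_left₀ (by linarith) (by linarith) 2
    _ = fidelity ρ σ := Real.sq_sqrt hF
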